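/- With perturbed weights w'(e) = mN·w(e) + r(e) as above (w integer-valued, 1 ≤ r(e) ≤ N, G connected), every extreme set of G under edge weights w is also an extreme set under edge weights w'. -/

import Mathlib

/-!
Write `w' = c·w + r` with `c = mN`. A cut meets at most `m` edges, each of `r`-weight at most `N`,
so the `r`-part of any cut lies in `[0, c]`, and it is at least `1` on a proper nonempty set of
the connected graph. Hence `δ_w(X) < δ_w(Y)`, i.e. `c·δ_w(X) + c ≤ c·δ_w(Y)` by integrality,
forces `δ_{w'}(X) < δ_{w'}(Y)`.
-/

open Finset
open scoped Classical

variable {V E : Type*} [Fintype V] [Fintype E] [DecidableEq V]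

def Crosses (ends : E → V × V) (e : E) (X : Finset V) : Prop :=
  ((ends e).1 ∈ X) ≠ ((ends e).2 ∈ X)

noncomputable def cutE (ends : E → V × V) (w : E → ℤ) (X : Finset V) : ℤ :=
  ∑ e ∈ Finset.univ.filter (fun e => Crosses ends e X), w e

def IsExtremeSet (ends : E → V × V) (w : E → ℤ) (X : Finset V) : Prop :=
  X.Nonempty ∧ X ≠ Finset.univ ∧
    ∀ Y : Finset V, Y.Nonempty → Y ⊂ X → cutE ends w X < cutE ends w Y

section Cut

omit [Fintype V] [DecidableEq V]

variable (ends : E → V × V)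

lemma cutE_mul_add (c : ℤ) (w r : E → ℤ) (S : Finset V) :
    cutE ends (fun e => c * w e + r e) S = c * cutE ends w S + cutE ends r S := by
  simp only [cutE, sum_add_distrib, mul_sum]

lemma cutE_nonneg {r : E → ℤ} (hr : ∀ e, 0 ≤ r e) (S : Finset V) : 0 ≤ cutE ends r S :=
  sum_nonneg fun e _ => hr e

lemma cutE_le_card_mul {r : E → ℤ} {N : ℤ} (hr₀ : ∀ e, 0 ≤ r e) (hrN : ∀ e, r e ≤ N)
    (S : Finset V) : cutE ends r S ≤ Fintype.card E * N :=
  calc cutE ends r S ≤ ∑ e, r e := sum_le_sum_of_subset_of_nonneg (filter_subset _ _)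
        fun e _ _ => hr₀ e
    _ ≤ Fintype.card E * N := by
        simpa using sum_le_card_nsmul univ r N fun e _ => hrN e

lemma cutE_pos {r : E → ℤ} (hr : ∀ e, 0 < r e) {S : Finset V} (hS : ∃ e, Crosses ends e S) :
    0 < cutE ends r S := by
  obtain ⟨e, he⟩ := hS
  exact sum_pos' (fun e _ => (hr e).le) ⟨e, mem_filter.2 ⟨mem_univ e, he⟩, hr e⟩

lemma cutE_mul_add_lt_of_lt {c : ℤ} {w r : E → ℤ} (hr₀ : ∀ e, 0 ≤ r e) {X Y : Finset V}
    (hrX : cutE ends r X ≤ c) (hrY : 0 < cutE ends r Y) (h : cutE ends w X < cutE ends w Y) :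
    cutE ends (fun e => c * w e + r e) X < cutE ends (fun e => c * w e + r e) Y := by
  have hc : 0 ≤ c := (cutE_nonneg ends hr₀ X).trans hrX
  have hscaled : c * (cutE ends w X + 1) ≤ c * cutE ends w Y := mul_le_mul_of_nonneg_left h hc
  rw [cutE_mul_add, cutE_mul_add]
  linarith

end Cut

omit [DecidableEq V] in
lemma IsExtremeSet.of_cutE_lt {ends : E → V × V} {w w' : E → ℤ} {X : Finset V}
    (hX : IsExtremeSet ends w X)
    (h : ∀ Y : Finset V, Y.Nonempty → Y ≠ univ → cutE ends w X < cutE ends w Y →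
      cutE ends w' X < cutE ends w' Y) :
    IsExtremeSet ends w' X := by
  obtain ⟨hne, hnu, hlt⟩ := hX
  refine ⟨hne, hnu, fun Y hY hYX => h Y hY ?_ (hlt Y hY hYX)⟩
  rintro rfl
  exact hYX.not_subset (subset_univ X)

theorem extreme_preserved_under_perturbation_general
    (ends : E → V × V) (w r : E → ℤ) (N : ℤ)
    (hr : ∀ e, 1 ≤ r e ∧ r e ≤ N)
    (hconn : ∀ X : Finset V, X.Nonempty → X ≠ Finset.univ → ∃ e, Crosses ends e X)
    (X : Finset V) (hX : IsExtremeSet ends w X) :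
    IsExtremeSet ends (fun e => (Fintype.card E : ℤ) * N * w e + r e) X := by
  have hr_pos : ∀ e, 0 < r e := fun e => (hr e).1
  have hr₀ : ∀ e, 0 ≤ r e := fun e => (hr_pos e).le
  refine hX.of_cutE_lt fun Y hY hYu hlt => cutE_mul_add_lt_of_lt ends hr₀ ?_ ?_ hlt
  · exact cutE_le_card_mul ends hr₀ (fun e => (hr e).2) X
  · exact cutE_pos ends hr_pos (hconn Y hY hYu)

/-- Every extreme set under weights `w` is also an extreme set under the perturbed
weights `w'(e) = mN·w(e) + r(e)`. -/
theorem extreme_preserved_under_perturbation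
    (ends : E → V × V) (w r : E → ℤ) (N : ℤ) (hN : 1 ≤ N)
    (hw : ∀ e, 1 ≤ w e) (hr : ∀ e, 1 ≤ r e ∧ r e ≤ N)
    (hconn : ∀ X : Finset V, X.Nonempty → X ≠ Finset.univ → ∃ e, Crosses ends e X)
    (X : Finset V) (hX : IsExtremeSet ends w X) :
    IsExtremeSet ends (fun e => (Fintype.card E : ℤ) * N * w e + r e) X :=
  extreme_preserved_under_perturbation_general ends w r N hr hconn X hX
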